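/- arXiv:2010.00493 — 4 statements merged into one kernel-verified Lean document; each statement's English description precedes it below -/
import Mathlib

section
/- Let H be a finite-dimensional real inner product space of dimension q, A : H → ℝⁿ a linear map, u ∈ ℝⁿ, C > 0, and σ > 0. Then ∫_H exp(−(C/(2σ²))‖g‖² − (1/(2σ²))‖A g − u‖²) dg = exp(−(1/(2σ²))(C‖g_min‖² + ‖A g_min − u‖²)) · det((1/(2πσ²))(AᵀA + C I))^{−1/2}, where g_min is the unique minimizer over H of g ↦ C‖g‖² + ‖A g − u‖². -/
/-!
Expanding the Tikhonov functional around its minimizer `gmin`, the first-order condition kills the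
linear term, so the exponent is `-α Q(gmin) - ⟪S (g - gmin), g - gmin⟫` with
`S = α (AᵀA + C)`, `α = 1 / (2σ²)`. After translating by `gmin`, an orthonormal eigenbasis of the
positive definite operator `S` turns the remaining integral into a product of one-dimensional
Gaussian integrals `√(π / μᵢ)` over the eigenvalues `μᵢ` of `S`, and their product is
`det (π⁻¹ S) ^ (-1/2)`.
-/

open MeasureTheory Real
open scoped RealInnerProductSpace

theorem integral_exp_neg_sum_mul_sq {ι : Type*} [Fintype ι] (c : ι → ℝ) :
    ∫ y : ι → ℝ, exp (-∑ i, c i * y i ^ 2) = ∏ i, √(π / c i) := by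
  simp_rw [← Finset.sum_neg_distrib, exp_sum, ← neg_mul]
  rw [volume_pi, integral_fintype_prod_eq_prod (fun i t => exp (-c i * t ^ 2))]
  simp_rw [integral_gaussian]

namespace LinearMap.IsSymmetric

variable {E : Type*} [NormedAddCommGroup E] [InnerProductSpace ℝ E] [FiniteDimensional ℝ E]
  {T : E →ₗ[ℝ] E} {n : ℕ}

theorem inner_apply_self_eq_sum_eigenvalues (hT : T.IsSymmetric) (hn : Module.finrank ℝ E = n)
    (x : E) :
    ⟪T x, x⟫ = ∑ i, hT.eigenvalues hn i * (hT.eigenvectorBasis hn).repr x i ^ 2 := by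
  rw [← (hT.eigenvectorBasis hn).repr.inner_map_map, PiLp.inner_apply]
  refine Finset.sum_congr rfl fun i _ => ?_
  rw [hT.eigenvectorBasis_apply_self_apply]
  simp only [RCLike.inner_apply, conj_trivial, RCLike.ofReal_real_eq_id, id_eq]
  ring

theorem eigenvalues_pos (hT : T.IsSymmetric) (hpos : ∀ x, x ≠ 0 → 0 < ⟪T x, x⟫)
    (hn : Module.finrank ℝ E = n) (i : Fin n) : 0 < hT.eigenvalues hn i := by
  have hb := (hT.eigenvectorBasis hn).orthonormal
  simpa [hT.apply_eigenvectorBasis, real_inner_smul_left, hb.1 i] using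
    hpos _ (hb.ne_zero i)

end LinearMap.IsSymmetric

theorem integral_exp_neg_inner_apply_self {E : Type*} [NormedAddCommGroup E]
    [InnerProductSpace ℝ E] [FiniteDimensional ℝ E] [MeasurableSpace E] [BorelSpace E]
    {T : E →ₗ[ℝ] E} (hT : T.IsSymmetric) (hpos : ∀ x, x ≠ 0 → 0 < ⟪T x, x⟫) :
    ∫ x : E, exp (-⟪T x, x⟫) = LinearMap.det (π⁻¹ • T) ^ (-(1 : ℝ) / 2) := by
  set b := hT.eigenvectorBasis rfl
  set μ := hT.eigenvalues rfl
  have hμ := hT.eigenvalues_pos hpos rfl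
  have hint : ∫ x : E, exp (-⟪T x, x⟫) = ∏ i, √(π / μ i) := by
    simp_rw [hT.inner_apply_self_eq_sum_eigenvalues rfl]
    rw [← integral_exp_neg_sum_mul_sq,
      ← (EuclideanSpace.volume_preserving_symm_measurableEquiv_toLp _).integral_comp',
      ← b.measurePreserving_measurableEquiv.integral_comp']
    rfl
  have hdet : LinearMap.det (π⁻¹ • T) = ∏ i, μ i / π := by
    rw [LinearMap.det_smul, hT.det_eq_prod_eigenvalues rfl, Finset.prod_div_distrib,
      Finset.prod_const, Finset.card_univ, Fintype.card_fin, inv_pow, div_eq_inv_mul]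
    simp only [RCLike.ofReal_real_eq_id, id_eq, μ]
  rw [hint, hdet, ← Real.finsetProd_rpow _ _ fun i _ => (div_pos (hμ i) pi_pos).le]
  refine Finset.prod_congr rfl fun i _ => ?_
  rw [← inv_div, sqrt_inv, sqrt_eq_rpow, ← rpow_neg (div_pos (hμ i) pi_pos).le]
  norm_num

section Tikhonov

variable {E F 𝓕 : Type*} [NormedAddCommGroup E] [InnerProductSpace ℝ E]
  [NormedAddCommGroup F] [InnerProductSpace ℝ F] [FunLike 𝓕 E F] [LinearMapClass 𝓕 ℝ E F]
  (A : 𝓕) (u : F) (C : ℝ)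

def tikhonov (g : E) : ℝ := C * ‖g‖ ^ 2 + ‖A g - u‖ ^ 2

theorem tikhonov_add (x v : E) :
    tikhonov A u C (x + v) = tikhonov A u C x + (C * ‖v‖ ^ 2 + ‖A v‖ ^ 2)
      + 2 * (C * ⟪x, v⟫ + ⟪A x - u, A v⟫) := by
  have hA : A (x + v) - u = (A x - u) + A v := by rw [map_add]; abel
  rw [tikhonov, tikhonov, hA, norm_add_sq_real, norm_add_sq_real]
  ring

variable {A u C}

theorem tikhonov_normal_eq {x : E} (hx : ∀ h, tikhonov A u C x ≤ tikhonov A u C h) (v : E) :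
    C * ⟪x, v⟫ + ⟪A x - u, A v⟫ = 0 := by
  set L := C * ⟪x, v⟫ + ⟪A x - u, A v⟫
  have hquad : ∀ t : ℝ, 0 ≤ (C * ‖v‖ ^ 2 + ‖A v‖ ^ 2) * (t * t) + 2 * L * t + 0 := by
    intro t
    have := hx (x + t • v)
    rw [tikhonov_add, map_smul, norm_smul, norm_smul, real_inner_smul_right,
      real_inner_smul_right, Real.norm_eq_abs, mul_pow, mul_pow, sq_abs] at this
    linarith
  have := discrim_le_zero hquad
  rw [discrim] at this
  nlinarith [sq_nonneg L]

theorem tikhonov_eq_add_of_isMin {x : E} (hx : ∀ h, tikhonov A u C x ≤ tikhonov A u C h)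
    (g : E) :
    tikhonov A u C g = tikhonov A u C x + (C * ‖g - x‖ ^ 2 + ‖A (g - x)‖ ^ 2) := by
  have := tikhonov_add A u C x (g - x)
  rw [add_sub_cancel, tikhonov_normal_eq hx] at this
  linarith

end Tikhonov

theorem inner_adjoint_comp_add_smul_one_apply {E F : Type*} [NormedAddCommGroup E]
    [InnerProductSpace ℝ E] [CompleteSpace E] [NormedAddCommGroup F] [InnerProductSpace ℝ F]
    [CompleteSpace F] (A : E →L[ℝ] F) (C : ℝ) (v w : E) :
    ⟪(ContinuousLinearMap.adjoint A ∘L A + C • 1) v, w⟫ = ⟪A v, A w⟫ + C * ⟪v, w⟫ := by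
  simp only [add_apply, ContinuousLinearMap.comp_apply, smul_apply, one_apply_eq_self,
    inner_add_left, ContinuousLinearMap.adjoint_inner_left, real_inner_smul_left]

theorem gaussian_tikhonov_integral
    (q n : ℕ) (A : EuclideanSpace ℝ (Fin q) →L[ℝ] EuclideanSpace ℝ (Fin n))
    (u : EuclideanSpace ℝ (Fin n)) (C σ : ℝ) (hC : 0 < C) (hσ : 0 < σ)
    (gmin : EuclideanSpace ℝ (Fin q))
    (hgmin : ∀ h : EuclideanSpace ℝ (Fin q),
      C * ‖gmin‖ ^ 2 + ‖A gmin - u‖ ^ 2 ≤ C * ‖h‖ ^ 2 + ‖A h - u‖ ^ 2) :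
    ∫ g : EuclideanSpace ℝ (Fin q),
        Real.exp (-(C / (2 * σ ^ 2)) * ‖g‖ ^ 2 - (1 / (2 * σ ^ 2)) * ‖A g - u‖ ^ 2)
      = Real.exp (-(1 / (2 * σ ^ 2)) * (C * ‖gmin‖ ^ 2 + ‖A gmin - u‖ ^ 2)) *
        (LinearMap.det
          (((1 / (2 * Real.pi * σ ^ 2)) •
              ((ContinuousLinearMap.adjoint A).comp A + C • (1 : EuclideanSpace ℝ (Fin q) →L[ℝ] EuclideanSpace ℝ (Fin q)))).toLinearMap)) ^ (-(1 : ℝ) / 2) := by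
  set T := ContinuousLinearMap.adjoint A ∘L A + C • 1
  set α := 1 / (2 * σ ^ 2)
  have hα : 0 < α := by positivity
  set S : EuclideanSpace ℝ (Fin q) →ₗ[ℝ] EuclideanSpace ℝ (Fin q) := α • T.toLinearMap
  have hS : ∀ v w, ⟪S v, w⟫ = α * (⟪A v, A w⟫ + C * ⟪v, w⟫) := fun v w => by
    simp only [S, LinearMap.smul_apply, ContinuousLinearMap.coe_coe, real_inner_smul_left,
      inner_adjoint_comp_add_smul_one_apply, T]
  have hS_symm : S.IsSymmetric := fun v w => by
    rw [real_inner_comm (S w), hS, hS, real_inner_comm (A v), real_inner_comm v]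
  have hS_pos : ∀ v, v ≠ 0 → 0 < ⟪S v, v⟫ := fun v hv => by
    rw [hS, real_inner_self_eq_norm_sq, real_inner_self_eq_norm_sq]
    have := norm_pos_iff.mpr hv
    positivity
  have hsplit : ∀ g, exp (-(C / (2 * σ ^ 2)) * ‖g‖ ^ 2 - α * ‖A g - u‖ ^ 2)
      = exp (-α * tikhonov A u C gmin) * exp (-⟪S (g - gmin), g - gmin⟫) := fun g => by
    have hmin := tikhonov_eq_add_of_isMin hgmin g
    rw [tikhonov, tikhonov] at hmin
    rw [← exp_add, hS, real_inner_self_eq_norm_sq, real_inner_self_eq_norm_sq, tikhonov]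
    congr 1
    simp only [α]
    linear_combination (-1 / (2 * σ ^ 2)) * hmin
  simp_rw [hsplit]
  rw [integral_const_mul, integral_sub_right_eq_self (fun g => exp (-⟪S g, g⟫)) gmin,
    integral_exp_neg_inner_apply_self hS_symm hS_pos, smul_smul]
  congr 4
  simp only [α]
  field_simp
end

section
/- Let f_C : B → ℝ be continuous on a compact set B ⊆ ℝ³, with a unique global minimizer m̃, and let 0 < γ₁ < γ₂ be such that f_C ≤ γ₁ on a closed ball B̄(m̃, η′) ∩ B of positive measure and f_C ≥ γ₂ on B \ B(m̃, η). For each N define the probability density ρ_N(m) ∝ f_C(m)^{−3N/2} on B. Then the ρ_N-probability of the set B \ B(m̃, η) is O((γ₁/γ₂)^{3N/2}), and in particular converges to 0 as N → ∞. -/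
/-!
On the far set `S = B \ ball m̃ η` the unnormalised density `f ^ (-s)` is at most `γ₂ ^ (-s)`,
while on the near set `G = closedBall m̃ η' ∩ B` it is at least `γ₁ ^ (-s)`. Hence the normalising
integral is at least `γ₁ ^ (-s) |G|`, and the mass of `S` is at most `(|S| / |G|) (γ₁ / γ₂) ^ s`
with `s = 3N/2`, which tends to `0` because `γ₁ / γ₂ < 1`.
-/

open MeasureTheory Filter Topology

section RelativeMass

variable {α : Type*} [MeasurableSpace α] {μ : Measure α} {B S G : Set α}

lemma setIntegral_div_setIntegral_le_of_bounds {g : α → ℝ} (hB : MeasurableSet B)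
    (hS : MeasurableSet S) (hG : MeasurableSet G) (hSB : S ⊆ B) (hGB : G ⊆ B)
    (hSfin : μ S ≠ ⊤) (hGfin : μ G ≠ ⊤) (hGpos : μ G ≠ 0)
    (hg : IntegrableOn g B μ) (hg0 : ∀ x ∈ B, 0 ≤ g x) {a b : ℝ} (ha : 0 < a)
    (hgS : ∀ x ∈ S, g x ≤ b) (hgG : ∀ x ∈ G, a ≤ g x) :
    (∫ x in S, g x ∂μ) / ∫ x in B, g x ∂μ ≤ b * μ.real S / (a * μ.real G) := by
  have hGreal : 0 < μ.real G := ENNReal.toReal_pos hGpos hGfin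
  have hnum0 : 0 ≤ ∫ x in S, g x ∂μ := setIntegral_nonneg hS fun x hx => hg0 x (hSB hx)
  have hnum : ∫ x in S, g x ∂μ ≤ b * μ.real S := by
    refine (Real.le_norm_self _).trans
      (norm_setIntegral_le_of_norm_le_const hSfin.lt_top fun x hx => ?_)
    rw [Real.norm_of_nonneg (hg0 x (hSB hx))]
    exact hgS x hx
  have hden : a * μ.real G ≤ ∫ x in B, g x ∂μ :=
    calc a * μ.real G ≤ ∫ x in G, g x ∂μ :=
          setIntegral_ge_of_const_le_real hG hGfin hgG (hg.mono_set hGB)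
      _ ≤ ∫ x in B, g x ∂μ :=
          setIntegral_mono_set hg (ae_restrict_of_forall_mem hB hg0) hGB.eventuallyLE
  exact div_le_div₀ (hnum0.trans hnum) hnum (by positivity) hden

variable [TopologicalSpace α] [OpensMeasurableSpace α] [T2Space α] [IsFiniteMeasureOnCompacts μ]

lemma setIntegral_rpow_neg_div_le {f : α → ℝ} {s γ₁ γ₂ : ℝ} (hs : 0 ≤ s) (hB : IsCompact B)
    (hS : MeasurableSet S) (hG : MeasurableSet G) (hSB : S ⊆ B) (hGB : G ⊆ B) (hGpos : μ G ≠ 0)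
    (hf : ContinuousOn f B) (hf0 : ∀ x ∈ B, 0 < f x) (hγ₁ : 0 < γ₁) (hγ₂ : 0 < γ₂)
    (hfS : ∀ x ∈ S, γ₂ ≤ f x) (hfG : ∀ x ∈ G, f x ≤ γ₁) :
    (∫ x in S, f x ^ (-s) ∂μ) / ∫ x in B, f x ^ (-s) ∂μ ≤
      μ.real S / μ.real G * (γ₁ / γ₂) ^ s := by
  have hneg : -s ≤ 0 := neg_nonpos.mpr hs
  have hint : IntegrableOn (fun x => f x ^ (-s)) B μ :=
    (hf.rpow_const fun x hx => Or.inl (hf0 x hx).ne').integrableOn_compact hB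
  calc (∫ x in S, f x ^ (-s) ∂μ) / ∫ x in B, f x ^ (-s) ∂μ
      ≤ γ₂ ^ (-s) * μ.real S / (γ₁ ^ (-s) * μ.real G) :=
        setIntegral_div_setIntegral_le_of_bounds hB.measurableSet hS hG hSB hGB
          (measure_ne_top_of_subset hSB hB.measure_ne_top)
          (measure_ne_top_of_subset hGB hB.measure_ne_top) hGpos hint
          (fun x hx => (Real.rpow_pos_of_pos (hf0 x hx) _).le) (Real.rpow_pos_of_pos hγ₁ _)
          (fun x hx => Real.rpow_le_rpow_of_nonpos hγ₂ (hfS x hx) hneg)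
          (fun x hx => Real.rpow_le_rpow_of_nonpos (hf0 x (hGB hx)) (hfG x hx) hneg)
    _ = μ.real S / μ.real G * (γ₁ / γ₂) ^ s := by
        rw [Real.rpow_neg hγ₂.le, Real.rpow_neg hγ₁.le, Real.div_rpow hγ₁.le hγ₂.le]
        have : 0 < γ₁ ^ s := Real.rpow_pos_of_pos hγ₁ s
        have : 0 < γ₂ ^ s := Real.rpow_pos_of_pos hγ₂ s
        field_simp

end RelativeMass

theorem posterior_concentration_fixed_C_general
    (B : Set (EuclideanSpace ℝ (Fin 3))) (hB : IsCompact B)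
    (f : EuclideanSpace ℝ (Fin 3) → ℝ) (hfcont : ContinuousOn f B)
    (hfpos : ∀ m ∈ B, 0 < f m)
    (mtil : EuclideanSpace ℝ (Fin 3))
    (η' η γ₁ γ₂ : ℝ)
    (hγ₁ : 0 < γ₁) (hγ : γ₁ < γ₂)
    (hupper : ∀ m ∈ Metric.closedBall mtil η' ∩ B, f m ≤ γ₁)
    (hgoodpos : 0 < volume (Metric.closedBall mtil η' ∩ B))
    (hlower : ∀ m ∈ B \ Metric.ball mtil η, γ₂ ≤ f m)
    (ρ : ℕ → EuclideanSpace ℝ (Fin 3) → ℝ)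
    (hρ : ∀ N, ∀ m ∈ B, ρ N m =
      f m ^ (-(3 * (N : ℝ) / 2)) / ∫ m' in B, f m' ^ (-(3 * (N : ℝ) / 2))) :
    (∃ K : ℝ, ∀ N : ℕ,
      ∫ m in B \ Metric.ball mtil η, ρ N m ≤ K * (γ₁ / γ₂) ^ (3 * (N : ℝ) / 2)) ∧
    Tendsto (fun N : ℕ => ∫ m in B \ Metric.ball mtil η, ρ N m) atTop (nhds 0) := by
  set S := B \ Metric.ball mtil η
  set G := Metric.closedBall mtil η' ∩ B
  have hγ₂ : 0 < γ₂ := hγ₁.trans hγ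
  have hS : MeasurableSet S := hB.measurableSet.diff Metric.isOpen_ball.measurableSet
  have hG : MeasurableSet G := Metric.isClosed_closedBall.measurableSet.inter hB.measurableSet
  set K := volume.real S / volume.real G
  have hmass : ∀ N : ℕ, ∫ m in S, ρ N m =
      (∫ m in S, f m ^ (-(3 * (N : ℝ) / 2))) / ∫ m in B, f m ^ (-(3 * (N : ℝ) / 2)) := by
    intro N
    rw [← integral_div]
    exact setIntegral_congr_fun hS fun m hm => hρ N m hm.1
  have hbound : ∀ N : ℕ, ∫ m in S, ρ N m ≤ K * (γ₁ / γ₂) ^ (3 * (N : ℝ) / 2) := fun N =>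
    hmass N ▸ setIntegral_rpow_neg_div_le (by positivity) hB hS hG Set.sdiff_subset
      Set.inter_subset_right hgoodpos.ne' hfcont hfpos hγ₁ hγ₂ hlower hupper
  have hnonneg : ∀ N : ℕ, 0 ≤ ∫ m in S, ρ N m := fun N => by
    rw [hmass N]
    exact div_nonneg (setIntegral_nonneg hS fun m hm => (Real.rpow_pos_of_pos (hfpos m hm.1) _).le)
      (setIntegral_nonneg hB.measurableSet fun m hm => (Real.rpow_pos_of_pos (hfpos m hm) _).le)
  have hexponent : Tendsto (fun N : ℕ => 3 * (N : ℝ) / 2) atTop atTop :=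
    (tendsto_natCast_atTop_atTop.const_mul_atTop (by norm_num)).atTop_div_const (by norm_num)
  have hdecay : Tendsto (fun N : ℕ => K * (γ₁ / γ₂) ^ (3 * (N : ℝ) / 2)) atTop (𝓝 0) := by
    have hratio₀ : -1 < γ₁ / γ₂ := neg_one_lt_zero.trans (div_pos hγ₁ hγ₂)
    simpa using ((tendsto_rpow_atTop_of_base_lt_one _ hratio₀ ((div_lt_one hγ₂).mpr hγ)).comp
      hexponent).const_mul K
  exact ⟨⟨K, hbound⟩, squeeze_zero hnonneg hbound hdecay⟩

theorem posterior_concentration_fixed_C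
    (B : Set (EuclideanSpace ℝ (Fin 3))) (hB : IsCompact B)
    (f : EuclideanSpace ℝ (Fin 3) → ℝ) (hfcont : ContinuousOn f B)
    (hfpos : ∀ m ∈ B, 0 < f m)
    (mtil : EuclideanSpace ℝ (Fin 3)) (hmtil : mtil ∈ B)
    (hmin : ∀ m ∈ B, m ≠ mtil → f mtil < f m)
    (η' η γ₁ γ₂ : ℝ) (hη' : 0 < η') (hηη : η' < η)
    (hγ₁ : 0 < γ₁) (hγ : γ₁ < γ₂)
    (hupper : ∀ m ∈ Metric.closedBall mtil η' ∩ B, f m ≤ γ₁)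
    (hgoodpos : 0 < volume (Metric.closedBall mtil η' ∩ B))
    (hlower : ∀ m ∈ B \ Metric.ball mtil η, γ₂ ≤ f m)
    (ρ : ℕ → EuclideanSpace ℝ (Fin 3) → ℝ)
    (hρ : ∀ N, ∀ m ∈ B, ρ N m =
      f m ^ (-(3 * (N : ℝ) / 2)) / ∫ m' in B, f m' ^ (-(3 * (N : ℝ) / 2))) :
    (∃ K : ℝ, ∀ N : ℕ,
      ∫ m in B \ Metric.ball mtil η, ρ N m ≤ K * (γ₁ / γ₂) ^ (3 * (N : ℝ) / 2)) ∧
    Tendsto (fun N : ℕ => ∫ m in B \ Metric.ball mtil η, ρ N m) atTop (nhds 0) :=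
  posterior_concentration_fixed_C_general B hB f hfcont hfpos mtil η' η γ₁ γ₂ hγ₁ hγ hupper hgoodpos
    hlower ρ hρ
end

section
/- Let V, R be compact subsets of Euclidean space with finite Lebesgue measure and let H : V × R → ℝ be continuous. Let A : L²(R) → L²(V) be the integral operator with kernel H. Then A A* : L²(V) → L²(V) is an integral operator with continuous kernel K(x, x′) = ∫_R H(x, y) H(x′, y) dy, it is trace class, and tr(A A*) = ∫_V K(x, x) dx = ∫_V ∫_R H(x, y)² dy dx. -/
/-!
Let `h x ∈ L²(R)` be the section `H x`, so that `(A g)(x) = ⟪h x, g⟫`. Then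
`A (A* u)(x) = ⟪A (h x), u⟫ = ∫_V K(x, x') u(x') dx'`. For the trace, `⟪A A* bᵢ, bᵢ⟫ = ‖A* bᵢ‖²`;
with a Hilbert basis `c` of `L²(R)`, countable since `L²(R)` is separable, Parseval's identity
and monotone convergence give
`∑ᵢ ‖A* bᵢ‖² = ∑ⱼ ‖A cⱼ‖² = ∑ⱼ ∫_V ⟪h x, cⱼ⟫² dx = ∫_V ‖h x‖² dx = ∫_V ∫_R H(x, y)² dy dx`.
All sums are taken in `ℝ≥0∞`, where they can be exchanged freely; summability of the real
series then follows from the finiteness of the right-hand side.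
-/

open MeasureTheory ENNReal

local notation "⟪" x ", " y "⟫" => @inner ℝ _ _ x y

section HilbertBasis

variable {ι κ E F : Type*} [NormedAddCommGroup E] [InnerProductSpace ℝ E]
  [NormedAddCommGroup F] [InnerProductSpace ℝ F]

theorem HilbertBasis.countable [TopologicalSpace.SeparableSpace E] (b : HilbertBasis ι ℝ E) :
    Countable ι := by
  refine Pairwise.countable_of_isOpen_disjoint (s := fun i => Metric.ball (b i) (1 / 2))
    (fun i j hij => Metric.ball_disjoint_ball ?_) (fun _ => Metric.isOpen_ball)
    (fun _ => Metric.nonempty_ball.2 (by norm_num))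
  have hsq : dist (b i) (b j) ^ 2 = 2 := by
    rw [dist_eq_norm, norm_sub_sq_real, b.orthonormal.1 i, b.orthonormal.1 j,
      b.orthonormal.2 hij]
    norm_num
  nlinarith [dist_nonneg (x := b i) (y := b j)]

theorem HilbertBasis.ofReal_norm_sq_eq_tsum (b : HilbertBasis ι ℝ E) (x : E) :
    ENNReal.ofReal (‖x‖ ^ 2) = ∑' i, ENNReal.ofReal (⟪x, b i⟫ ^ 2) := by
  have hsq : ∀ i, ⟪x, b i⟫ * ⟪b i, x⟫ = ⟪x, b i⟫ ^ 2 := fun i => by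
    rw [real_inner_comm (b i) x, sq]
  have hsum := b.hasSum_inner_mul_inner x x
  simp only [hsq, real_inner_self_eq_norm_sq] at hsum
  rw [← hsum.tsum_eq, ENNReal.ofReal_tsum_of_nonneg (fun _ => sq_nonneg _) hsum.summable]

theorem ContinuousLinearMap.real_inner_comp_adjoint_apply_self [CompleteSpace E]
    [CompleteSpace F] (T : E →L[ℝ] F) (y : F) :
    ⟪T.comp (adjoint T) y, y⟫ = ‖adjoint T y‖ ^ 2 := by
  rw [comp_apply, ← adjoint_inner_right, real_inner_self_eq_norm_sq]

theorem ContinuousLinearMap.tsum_ofReal_norm_sq_adjoint_apply_eq [CompleteSpace E]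
    [CompleteSpace F] (T : E →L[ℝ] F) (b : HilbertBasis ι ℝ F) (c : HilbertBasis κ ℝ E) :
    ∑' i, ENNReal.ofReal (‖adjoint T (b i)‖ ^ 2) = ∑' j, ENNReal.ofReal (‖T (c j)‖ ^ 2) := by
  simp_rw [c.ofReal_norm_sq_eq_tsum, b.ofReal_norm_sq_eq_tsum, adjoint_inner_left,
    real_inner_comm (T _)]
  exact ENNReal.tsum_comm

end HilbertBasis

theorem hasSum_of_tsum_ofReal_eq_ofReal {ι : Type*} {f : ι → ℝ} {a : ℝ} (hf : ∀ i, 0 ≤ f i)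
    (ha : 0 ≤ a) (h : ∑' i, ENNReal.ofReal (f i) = ENNReal.ofReal a) : HasSum f a := by
  have hsum : Summable f := (ENNReal.summable_toReal (h ▸ ENNReal.ofReal_ne_top)).congr
    fun i => ENNReal.toReal_ofReal (hf i)
  rw [← ENNReal.ofReal_tsum_of_nonneg hf hsum,
    ENNReal.ofReal_eq_ofReal_iff (tsum_nonneg hf) ha] at h
  exact h ▸ hsum.hasSum

section L2

variable {X Y : Type*} [MeasurableSpace X] [MeasurableSpace Y] {μ : Measure X} {ν : Measure Y}

theorem MeasureTheory.L2.real_inner_eq_integral (f g : Lp ℝ 2 μ) :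
    ⟪f, g⟫ = ∫ x, f x * g x ∂μ := by
  simp [L2.inner_def, mul_comm]

theorem MeasureTheory.MemLp.real_inner_toLp_eq_integral {f : X → ℝ} (hf : MemLp f 2 μ)
    (g : Lp ℝ 2 μ) : ⟪hf.toLp f, g⟫ = ∫ x, f x * g x ∂μ := by
  rw [L2.real_inner_eq_integral]
  refine integral_congr_ae ?_
  filter_upwards [hf.coeFn_toLp] with x hx
  rw [hx]

theorem MeasureTheory.L2.ofReal_norm_sq_eq_lintegral (f : Lp ℝ 2 μ) :
    ENNReal.ofReal (‖f‖ ^ 2) = ∫⁻ x, ENNReal.ofReal (f x ^ 2) ∂μ := by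
  rw [← real_inner_self_eq_norm_sq, real_inner_eq_integral, ofReal_integral_eq_lintegral_ofReal]
  · simp_rw [sq]
  · simpa [sq] using L2.integrable_inner (𝕜 := ℝ) f f
  · exact Filter.Eventually.of_forall fun x => mul_self_nonneg _

theorem MeasureTheory.MemLp.real_inner_toLp_toLp {f g : X → ℝ} (hf : MemLp f 2 μ)
    (hg : MemLp g 2 μ) : ⟪hf.toLp f, hg.toLp g⟫ = ∫ x, f x * g x ∂μ := by
  rw [hf.real_inner_toLp_eq_integral]
  refine integral_congr_ae ?_
  filter_upwards [hg.coeFn_toLp] with x hx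
  rw [hx]

theorem ContinuousOn.memLp_restrict_of_isCompact [TopologicalSpace X] [OpensMeasurableSpace X]
    [T2Space X] [IsFiniteMeasureOnCompacts μ] {s : Set X} (hs : IsCompact s) {f : X → ℝ}
    (hf : ContinuousOn f s) (p : ℝ≥0∞) : MemLp f p (μ.restrict s) := by
  have : IsFiniteMeasure (μ.restrict s) := isFiniteMeasure_restrict.2 hs.measure_lt_top.ne
  obtain ⟨C, hC⟩ := hs.exists_bound_of_continuousOn hf
  exact MemLp.of_bound (hf.aestronglyMeasurable hs.measurableSet) C
    (ae_restrict_of_forall_mem hs.measurableSet hC)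

theorem ContinuousLinearMap.tsum_ofReal_norm_sq_apply_eq_lintegral {κ E : Type*}
    [NormedAddCommGroup E] [InnerProductSpace ℝ E] [Countable κ] (T : E →L[ℝ] Lp ℝ 2 μ)
    (h : X → E) (hT : ∀ g, T g =ᵐ[μ] fun x => ⟪h x, g⟫) (c : HilbertBasis κ ℝ E) :
    ∑' j, ENNReal.ofReal (‖T (c j)‖ ^ 2) = ∫⁻ x, ENNReal.ofReal (‖h x‖ ^ 2) ∂μ := by
  have hmeas : ∀ j, AEMeasurable (fun x => ENNReal.ofReal (⟪h x, c j⟫ ^ 2)) μ := fun j =>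
    (((Lp.aestronglyMeasurable (T (c j))).congr (hT (c j))).aemeasurable.pow_const
      2).ennreal_ofReal
  calc ∑' j, ENNReal.ofReal (‖T (c j)‖ ^ 2)
      = ∑' j, ∫⁻ x, ENNReal.ofReal (⟪h x, c j⟫ ^ 2) ∂μ := by
        refine tsum_congr fun j => ?_
        rw [L2.ofReal_norm_sq_eq_lintegral]
        refine lintegral_congr_ae ?_
        filter_upwards [hT (c j)] with x hx
        rw [hx]
    _ = ∫⁻ x, ∑' j, ENNReal.ofReal (⟪h x, c j⟫ ^ 2) ∂μ := (lintegral_tsum hmeas).symm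
    _ = ∫⁻ x, ENNReal.ofReal (‖h x‖ ^ 2) ∂μ := by simp_rw [c.ofReal_norm_sq_eq_tsum]

theorem ContinuousLinearMap.comp_adjoint_apply_ae_eq_integral
    (A : Lp ℝ 2 ν →L[ℝ] Lp ℝ 2 μ) {H : X → Y → ℝ} (hH : ∀ x, MemLp (H x) 2 ν)
    (hA : ∀ g : Lp ℝ 2 ν, A g =ᵐ[μ] fun x => ∫ y, H x y * g y ∂ν) (u : Lp ℝ 2 μ) :
    A.comp (adjoint A) u =ᵐ[μ] fun x => ∫ x', (∫ y, H x y * H x' y ∂ν) * u x' ∂μ := by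
  refine (hA _).trans (.of_forall fun x => ?_)
  have hAH : A ((hH x).toLp) =ᵐ[μ] fun x' => ∫ y, H x y * H x' y ∂ν := by
    filter_upwards [hA (hH x).toLp] with x' hx'
    rw [hx', ← (hH x').real_inner_toLp_eq_integral, real_inner_comm,
      MemLp.real_inner_toLp_toLp]
  calc ∫ y, H x y * adjoint A u y ∂ν
      = ⟪(hH x).toLp, adjoint A u⟫ := ((hH x).real_inner_toLp_eq_integral _).symm
    _ = ⟪A (hH x).toLp, u⟫ := adjoint_inner_right A _ u
    _ = ∫ x', A (hH x).toLp x' * u x' ∂μ := L2.real_inner_eq_integral _ _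
    _ = ∫ x', (∫ y, H x y * H x' y ∂ν) * u x' ∂μ := by
        refine integral_congr_ae ?_
        filter_upwards [hAH] with x' hx'
        rw [hx']

theorem ContinuousLinearMap.tsum_ofReal_inner_comp_adjoint_eq_lintegral
    [TopologicalSpace.SeparableSpace (Lp ℝ 2 ν)] (A : Lp ℝ 2 ν →L[ℝ] Lp ℝ 2 μ)
    {H : X → Y → ℝ} (hH : ∀ x, MemLp (H x) 2 ν)
    (hA : ∀ g : Lp ℝ 2 ν, A g =ᵐ[μ] fun x => ∫ y, H x y * g y ∂ν) {ι : Type*}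
    (b : HilbertBasis ι ℝ (Lp ℝ 2 μ)) :
    ∑' i, ENNReal.ofReal ⟪A.comp (adjoint A) (b i), b i⟫ =
      ∫⁻ x, ENNReal.ofReal (∫ y, H x y * H x y ∂ν) ∂μ := by
  obtain ⟨κ, c, -⟩ := exists_hilbertBasis ℝ (Lp ℝ 2 ν)
  have := c.countable
  have hAH : ∀ g, A g =ᵐ[μ] fun x => ⟪(hH x).toLp, g⟫ := fun g =>
    (hA g).trans (.of_forall fun x => ((hH x).real_inner_toLp_eq_integral g).symm)
  calc ∑' i, ENNReal.ofReal ⟪A.comp (adjoint A) (b i), b i⟫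
      = ∑' j, ENNReal.ofReal (‖A (c j)‖ ^ 2) := by
        simp_rw [real_inner_comp_adjoint_apply_self]
        exact A.tsum_ofReal_norm_sq_adjoint_apply_eq b c
    _ = ∫⁻ x, ENNReal.ofReal (‖(hH x).toLp‖ ^ 2) ∂μ :=
        A.tsum_ofReal_norm_sq_apply_eq_lintegral _ hAH c
    _ = ∫⁻ x, ENNReal.ofReal (∫ y, H x y * H x y ∂ν) ∂μ := by
        simp_rw [← real_inner_self_eq_norm_sq, MemLp.real_inner_toLp_toLp]

end L2

theorem AAstar_integral_kernel_trace
    (V R : Set (ℝ × ℝ)) (hV : IsCompact V) (hR : IsCompact R)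
    (H : (ℝ × ℝ) → (ℝ × ℝ) → ℝ)
    (hH : Continuous fun p : (ℝ × ℝ) × (ℝ × ℝ) => H p.1 p.2)
    (A : Lp ℝ 2 (volume.restrict R) →L[ℝ] Lp ℝ 2 (volume.restrict V))
    (hA : ∀ g : Lp ℝ 2 (volume.restrict R),
      (A g : (ℝ × ℝ) → ℝ) =ᵐ[volume.restrict V] fun x => ∫ y in R, H x y * g y) :
    (Continuous fun p : (ℝ × ℝ) × (ℝ × ℝ) => ∫ y in R, H p.1 y * H p.2 y) ∧
    (∀ u : Lp ℝ 2 (volume.restrict V),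
      ((A.comp (ContinuousLinearMap.adjoint A)) u : (ℝ × ℝ) → ℝ)
        =ᵐ[volume.restrict V]
          fun x => ∫ x' in V, (∫ y in R, H x y * H x' y) * u x') ∧
    (∀ (ι : Type) (b : HilbertBasis ι ℝ (Lp ℝ 2 (volume.restrict V))),
      Summable (fun i =>
        inner ℝ ((A.comp (ContinuousLinearMap.adjoint A)) (b i)) (b i) : ι → ℝ) ∧
      (∑' i, (inner ℝ ((A.comp (ContinuousLinearMap.adjoint A)) (b i)) (b i) : ℝ))
        = ∫ x in V, ∫ y in R, H x y * H x y ∧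
      (∫ x in V, ∫ y in R, H x y * H x y) = ∫ x in V, ∫ y in R, (H x y) ^ 2) := by
  have hsec : ∀ x, MemLp (H x) 2 (volume.restrict R) := fun x =>
    (hH.comp (.prodMk_right x)).continuousOn.memLp_restrict_of_isCompact hR 2
  have hK : Continuous fun p : (ℝ × ℝ) × (ℝ × ℝ) => ∫ y in R, H p.1 y * H p.2 y :=
    continuous_parametric_integral_of_continuous
      ((hH.comp (continuous_fst.fst.prodMk continuous_snd)).mul
        (hH.comp (continuous_fst.snd.prodMk continuous_snd))) hR
  refine ⟨hK, A.comp_adjoint_apply_ae_eq_integral hsec hA, fun ι b => ?_⟩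
  -- lets instance search find `SeparableSpace (Lp ℝ 2 (volume.restrict R))`
  have : Fact ((2 : ℝ≥0∞) ≠ ∞) := ⟨ofNat_ne_top⟩
  have hdiag_nonneg : ∀ x, 0 ≤ ∫ y in R, H x y * H x y := fun x =>
    integral_nonneg fun y => mul_self_nonneg _
  have hdiag_int : IntegrableOn (fun x => ∫ y in R, H x y * H x y) V :=
    (hK.comp (continuous_id.prodMk continuous_id)).continuousOn.integrableOn_compact hV
  have htrace : HasSum (fun i => ⟪A.comp (ContinuousLinearMap.adjoint A) (b i), b i⟫)
      (∫ x in V, ∫ y in R, H x y * H x y) := by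
    refine hasSum_of_tsum_ofReal_eq_ofReal
      (fun i => A.real_inner_comp_adjoint_apply_self (b i) ▸ sq_nonneg _)
      (integral_nonneg hdiag_nonneg) ?_
    rw [A.tsum_ofReal_inner_comp_adjoint_eq_lintegral hsec hA b,
      ofReal_integral_eq_lintegral_ofReal hdiag_int (.of_forall hdiag_nonneg)]
  exact ⟨htrace.summable, htrace.tsum_eq, by simp_rw [sq]⟩
end

section
/- Let B ⊆ ℝ³ be compact with positive Lebesgue measure, and suppose ρ_N : B × [C₀, C₁] → ℝ are probability densities of the form ρ_N(m, C) = I_N · D_N(m, C)^{−1/2} · G_N(m, C)^{−3M_N/2}, where 1 ≤ D_N(m, C) ≤ D̄ uniformly, G_N(m, C) ≤ γ₁ for all (m, C) with m ∈ B̄(m̃, η′) ∩ B, and G_N(m, C) ≥ γ₂ > γ₁ for all m ∈ B \ B(m̃, η), with I_N the normalizing constant. Then the probability under ρ_N of the event {m ∈ B \ B(m̃, η)} is bounded by a constant times (γ₁/γ₂)^{3M_N/2}, hence tends to 0 as M_N → ∞. -/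
/-!
Write `ρ = I · w`. On the good set `w ≥ (√D̄ · γ₁^e)⁻¹`, so normalization forces
`I · |good| · (√D̄ · γ₁^e)⁻¹ ≤ 1`; on the bad set `w ≤ γ₂^(-e)`, so the bad mass is at most
`|B × [C₀, C₁]| · I · γ₂^(-e) ≤ (|B × [C₀, C₁]| √D̄ / |good|) · (γ₁/γ₂)^e`, with `e = 3 M_N / 2`.
-/

open MeasureTheory Filter

section

variable {α : Type*} [MeasurableSpace α] {μ : Measure α} {S : Set α} {c : ℝ} {w : α → ℝ}

theorem pos_of_setIntegral_const_mul_eq_one (hw : ∀ x ∈ S, 0 ≤ w x) (hS : MeasurableSet S)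
    (hnorm : ∫ x in S, c * w x ∂μ = 1) : 0 < c := by
  rw [integral_const_mul] at hnorm
  have : 0 ≤ ∫ x in S, w x ∂μ := setIntegral_nonneg hS hw
  by_contra! hc
  nlinarith

theorem setIntegral_const_mul_le_of_bounds {Good Bad : Set α} {L U : ℝ}
    (hS : MeasurableSet S) (hSfin : μ S ≠ ⊤) (hGood : MeasurableSet Good)
    (hBad : MeasurableSet Bad) (hGoodS : Good ⊆ S) (hBadS : Bad ⊆ S) (hGood_pos : 0 < μ Good)
    (hw : ∀ x ∈ S, 0 ≤ w x) (hnorm : ∫ x in S, c * w x ∂μ = 1)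
    (hL : 0 < L) (hU : 0 ≤ U) (hlow : ∀ x ∈ Good, L ≤ w x) (hup : ∀ x ∈ Bad, w x ≤ U) :
    ∫ x in Bad, c * w x ∂μ ≤ μ.real S / μ.real Good * (U / L) := by
  have hc : 0 < c := pos_of_setIntegral_const_mul_eq_one hw hS hnorm
  have hint : IntegrableOn (fun x => c * w x) S μ :=
    Integrable.of_integral_ne_zero (by rw [hnorm]; exact one_ne_zero)
  have hGood_fin : μ Good ≠ ⊤ := measure_ne_top_of_subset hGoodS hSfin
  have hGood_real : 0 < μ.real Good := ENNReal.toReal_pos hGood_pos.ne' hGood_fin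
  have hBad_fin : μ Bad ≠ ⊤ := measure_ne_top_of_subset hBadS hSfin
  have hcL : μ.real Good * (c * L) ≤ 1 := calc
    μ.real Good * (c * L) = ∫ _ in Good, c * L ∂μ := by rw [setIntegral_const, smul_eq_mul]
    _ ≤ ∫ x in Good, c * w x ∂μ :=
      setIntegral_mono_on (integrableOn_const hGood_fin) (hint.mono_set hGoodS) hGood
        fun x hx => mul_le_mul_of_nonneg_left (hlow x hx) hc.le
    _ ≤ ∫ x in S, c * w x ∂μ :=
      setIntegral_mono_set hint ((ae_restrict_iff' hS).2 (ae_of_all _ fun x hx =>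
        mul_nonneg hc.le (hw x hx))) hGoodS.eventuallyLE
    _ = 1 := hnorm
  have hc_le : c ≤ 1 / (μ.real Good * L) := by
    rw [le_div_iff₀ (by positivity)]
    linarith
  calc ∫ x in Bad, c * w x ∂μ ≤ ∫ _ in Bad, c * U ∂μ :=
        setIntegral_mono_on (hint.mono_set hBadS) (integrableOn_const hBad_fin) hBad
          fun x hx => mul_le_mul_of_nonneg_left (hup x hx) hc.le
    _ = μ.real Bad * (c * U) := by rw [setIntegral_const, smul_eq_mul]
    _ ≤ μ.real S * (c * U) := by gcongr
    _ ≤ μ.real S * (1 / (μ.real Good * L) * U) := by gcongr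
    _ = μ.real S / μ.real Good * (U / L) := by ring

end

theorem inv_sqrt_mul_rpow_le_rpow_neg_half_mul_rpow_neg {d D g γ e : ℝ} (hd : 1 ≤ d)
    (hdD : d ≤ D) (hg : 0 < g) (hgγ : g ≤ γ) (he : 0 ≤ e) :
    (√D * γ ^ e)⁻¹ ≤ d ^ (-(1 : ℝ) / 2) * g ^ (-e) := by
  rw [neg_div, Real.rpow_neg (by linarith), Real.rpow_neg hg.le, ← Real.sqrt_eq_rpow, mul_inv]
  have hsqrt : 0 < √d := Real.sqrt_pos.2 (by linarith)
  have hγe : 0 < γ ^ e := Real.rpow_pos_of_pos (hg.trans_le hgγ) e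
  gcongr

theorem rpow_neg_half_mul_rpow_neg_le {d g γ e : ℝ} (hd : 1 ≤ d) (hγ : 0 < γ) (hγg : γ ≤ g)
    (he : 0 ≤ e) : d ^ (-(1 : ℝ) / 2) * g ^ (-e) ≤ (γ ^ e)⁻¹ := by
  rw [Real.rpow_neg (hγ.trans_le hγg).le]
  have hd_le : d ^ (-(1 : ℝ) / 2) ≤ 1 := Real.rpow_le_one_of_one_le_of_nonpos hd (by norm_num)
  have hγe : 0 < γ ^ e := Real.rpow_pos_of_pos hγ e
  have hg_le : (g ^ e)⁻¹ ≤ (γ ^ e)⁻¹ := by gcongr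
  have hg_nonneg : 0 ≤ (g ^ e)⁻¹ := inv_nonneg.2 (Real.rpow_nonneg (hγ.le.trans hγg) e)
  simpa using mul_le_mul hd_le hg_le hg_nonneg zero_le_one

theorem setIntegral_posterior_mem_Icc {α : Type*} [MeasurableSpace α] {μ : Measure α}
    {S Good Bad : Set α} (hS : MeasurableSet S) (hSfin : μ S ≠ ⊤) (hGood : MeasurableSet Good)
    (hBad : MeasurableSet Bad) (hGoodS : Good ⊆ S) (hBadS : Bad ⊆ S) (hGood_pos : 0 < μ Good)
    {c Dbar γ₁ γ₂ e : ℝ} {d g : α → ℝ} (hDbar : 1 ≤ Dbar) (hγ₁ : 0 < γ₁) (hγ₂ : 0 < γ₂)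
    (he : 0 ≤ e) (hd : ∀ x ∈ S, 1 ≤ d x ∧ d x ≤ Dbar) (hg : ∀ x ∈ S, 0 < g x)
    (hgGood : ∀ x ∈ Good, g x ≤ γ₁) (hgBad : ∀ x ∈ Bad, γ₂ ≤ g x)
    (hnorm : ∫ x in S, c * d x ^ (-(1 : ℝ) / 2) * g x ^ (-e) ∂μ = 1) :
    ∫ x in Bad, c * d x ^ (-(1 : ℝ) / 2) * g x ^ (-e) ∂μ ∈
      Set.Icc 0 (μ.real S * √Dbar / μ.real Good * (γ₁ / γ₂) ^ e) := by
  simp only [mul_assoc] at hnorm ⊢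
  have hw : ∀ x ∈ S, 0 ≤ d x ^ (-(1 : ℝ) / 2) * g x ^ (-e) := fun x hx =>
    mul_nonneg (Real.rpow_nonneg (zero_le_one.trans (hd x hx).1) _)
      (Real.rpow_nonneg (hg x hx).le _)
  have hc : 0 < c := pos_of_setIntegral_const_mul_eq_one hw hS hnorm
  refine ⟨setIntegral_nonneg hBad fun x hx => mul_nonneg hc.le (hw x (hBadS hx)), ?_⟩
  have hsqrt : 0 < √Dbar := Real.sqrt_pos.2 (zero_lt_one.trans_le hDbar)
  have hγ₁e : 0 < γ₁ ^ e := Real.rpow_pos_of_pos hγ₁ e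
  have hγ₂e : 0 < γ₂ ^ e := Real.rpow_pos_of_pos hγ₂ e
  refine (setIntegral_const_mul_le_of_bounds hS hSfin hGood hBad hGoodS hBadS hGood_pos hw
    hnorm (by positivity) (by positivity)
    (fun x hx => inv_sqrt_mul_rpow_le_rpow_neg_half_mul_rpow_neg (hd x (hGoodS hx)).1
      (hd x (hGoodS hx)).2 (hg x (hGoodS hx)) (hgGood x hx) he)
    (fun x hx => rpow_neg_half_mul_rpow_neg_le (hd x (hBadS hx)).1 hγ₂ (hgBad x hx) he)).trans_eq ?_
  rw [Real.div_rpow hγ₁.le hγ₂.le]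
  field_simp

theorem posterior_concentration_joint_general
    (B : Set (EuclideanSpace ℝ (Fin 3))) (hB : IsCompact B)
    (C₀ C₁ : ℝ) (hC : C₀ < C₁)
    (mtil : EuclideanSpace ℝ (Fin 3))
    (η' η : ℝ)
    (γ₁ γ₂ Dbar : ℝ) (hγ₁ : 0 < γ₁) (hγ : γ₁ < γ₂) (hDbar : 1 ≤ Dbar)
    (M : ℕ → ℕ) (hM : Tendsto M atTop atTop)
    (D G : ℕ → EuclideanSpace ℝ (Fin 3) × ℝ → ℝ)
    (hD : ∀ N, ∀ p ∈ B ×ˢ Set.Icc C₀ C₁, 1 ≤ D N p ∧ D N p ≤ Dbar)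
    (hGupper : ∀ N, ∀ p ∈ (Metric.closedBall mtil η' ∩ B) ×ˢ Set.Icc C₀ C₁,
      G N p ≤ γ₁)
    (hGpos : ∀ N, ∀ p ∈ B ×ˢ Set.Icc C₀ C₁, 0 < G N p)
    (hgoodpos : 0 < volume (Metric.closedBall mtil η' ∩ B))
    (hGlower : ∀ N, ∀ p ∈ ((B \ Metric.ball mtil η) ×ˢ Set.Icc C₀ C₁),
      γ₂ ≤ G N p)
    (I : ℕ → ℝ)
    (ρ : ℕ → EuclideanSpace ℝ (Fin 3) × ℝ → ℝ)
    (hρ : ∀ N p, ρ N p =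
      I N * (D N p) ^ (-(1 : ℝ) / 2) * (G N p) ^ (-(3 * (M N : ℝ) / 2)))
    (hnorm : ∀ N, ∫ p in B ×ˢ Set.Icc C₀ C₁, ρ N p = 1) :
    (∃ K : ℝ, ∀ N,
      ∫ p in (B \ Metric.ball mtil η) ×ˢ Set.Icc C₀ C₁, ρ N p ≤
        K * (γ₁ / γ₂) ^ (3 * (M N : ℝ) / 2)) ∧
    Tendsto (fun N => ∫ p in (B \ Metric.ball mtil η) ×ˢ Set.Icc C₀ C₁, ρ N p)
      atTop (nhds 0) := by
  simp only [hρ] at hnorm ⊢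
  have hγ₂ : 0 < γ₂ := hγ₁.trans hγ
  have hGood_pos : 0 < volume ((Metric.closedBall mtil η' ∩ B) ×ˢ Set.Icc C₀ C₁) := by
    rw [Measure.volume_eq_prod, Measure.prod_prod]
    exact ENNReal.mul_pos hgoodpos.ne' (by simp [hC])
  have hmass N := setIntegral_posterior_mem_Icc (hB.measurableSet.prod measurableSet_Icc)
    (hB.prod isCompact_Icc).measure_lt_top.ne
    ((measurableSet_closedBall.inter hB.measurableSet).prod measurableSet_Icc)
    ((hB.measurableSet.diff measurableSet_ball).prod measurableSet_Icc)
    (Set.prod_mono Set.inter_subset_right le_rfl) (Set.prod_mono Set.sdiff_subset le_rfl)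
    hGood_pos hDbar hγ₁ hγ₂ (by positivity) (hD N) (hGpos N) (hGupper N) (hGlower N) (hnorm N)
  have hexp : Tendsto (fun N => 3 * (M N : ℝ) / 2) atTop atTop :=
    ((tendsto_natCast_atTop_atTop.comp hM).const_mul_atTop three_pos).atTop_div_const two_pos
  refine ⟨⟨_, fun N => (hmass N).2⟩,
    squeeze_zero (fun N => (hmass N).1) (fun N => (hmass N).2) ?_⟩
  simpa using ((tendsto_rpow_atTop_of_base_lt_one _ (by linarith [div_pos hγ₁ hγ₂])
    ((div_lt_one hγ₂).2 hγ)).comp hexp).const_mul _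

theorem posterior_concentration_joint
    (B : Set (EuclideanSpace ℝ (Fin 3))) (hB : IsCompact B) (hBpos : 0 < volume B)
    (C₀ C₁ : ℝ) (hC₀ : 0 < C₀) (hC : C₀ < C₁)
    (mtil : EuclideanSpace ℝ (Fin 3)) (hmtil : mtil ∈ B)
    (η' η : ℝ) (hη' : 0 < η') (hηη : η' < η)
    (γ₁ γ₂ Dbar : ℝ) (hγ₁ : 0 < γ₁) (hγ : γ₁ < γ₂) (hDbar : 1 ≤ Dbar)
    (M : ℕ → ℕ) (hM : Tendsto M atTop atTop)
    (D G : ℕ → EuclideanSpace ℝ (Fin 3) × ℝ → ℝ)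
    (hDmeas : ∀ N, Measurable (D N)) (hGmeas : ∀ N, Measurable (G N))
    (hD : ∀ N, ∀ p ∈ B ×ˢ Set.Icc C₀ C₁, 1 ≤ D N p ∧ D N p ≤ Dbar)
    (hGupper : ∀ N, ∀ p ∈ (Metric.closedBall mtil η' ∩ B) ×ˢ Set.Icc C₀ C₁,
      G N p ≤ γ₁)
    (hGpos : ∀ N, ∀ p ∈ B ×ˢ Set.Icc C₀ C₁, 0 < G N p)
    (hgoodpos : 0 < volume (Metric.closedBall mtil η' ∩ B))
    (hGlower : ∀ N, ∀ p ∈ ((B \ Metric.ball mtil η) ×ˢ Set.Icc C₀ C₁),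
      γ₂ ≤ G N p)
    (I : ℕ → ℝ)
    (ρ : ℕ → EuclideanSpace ℝ (Fin 3) × ℝ → ℝ)
    (hρ : ∀ N p, ρ N p =
      I N * (D N p) ^ (-(1 : ℝ) / 2) * (G N p) ^ (-(3 * (M N : ℝ) / 2)))
    (hnorm : ∀ N, ∫ p in B ×ˢ Set.Icc C₀ C₁, ρ N p = 1) :
    (∃ K : ℝ, ∀ N,
      ∫ p in (B \ Metric.ball mtil η) ×ˢ Set.Icc C₀ C₁, ρ N p ≤
        K * (γ₁ / γ₂) ^ (3 * (M N : ℝ) / 2)) ∧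
    Tendsto (fun N => ∫ p in (B \ Metric.ball mtil η) ×ˢ Set.Icc C₀ C₁, ρ N p)
      atTop (nhds 0) :=
  posterior_concentration_joint_general B hB C₀ C₁ hC mtil η' η γ₁ γ₂ Dbar hγ₁ hγ hDbar M hM D G hD
    hGupper hGpos hgoodpos hGlower I ρ hρ hnorm
end
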